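/- arXiv:1811.04425 — 4 statements merged into one kernel-verified Lean document; each statement's English description precedes it below -/
import Mathlib

section
/- Let G be a finite simple graph with arboricity at most α, and let n_t denote the number of t-cliques in G. Then for every t ≥ 2, n_t ≤ (2α/t)·n_{t-1}. -/
/-!
Double count triples `(s, u, v)` with `s` a `(t-2)`-clique and `u, v` adjacent vertices of the
common neighbourhood `N(s)` of `s`. Each `t`-clique arises from exactly `t(t-1)` such triples.
For fixed `s`, the pairs `(u, v)` are the ordered edges inside `N(s)`, of which there are at most
`2α|N(s)|` by the arboricity bound; and `∑ₛ |N(s)| = (t-1) n_{t-1}`, since each `(t-1)`-clique is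
obtained from `t-1` pairs `(s, u)` with `u ∈ N(s)`. Hence `t(t-1) n_t ≤ 2α(t-1) n_{t-1}`.
-/

open Finset

namespace SimpleGraph

variable {V : Type*} [Fintype V] [DecidableEq V] (G : SimpleGraph V) [DecidableRel G.Adj]

lemma sum_card_neighborFinset_inter (S : Finset V) :
    ∑ u ∈ S, #(G.neighborFinset u ∩ S) = 2 * #{e ∈ G.edgeFinset | ∀ v ∈ e, v ∈ S} := by
  have hdeg (u : (S : Set V)) : (G.induce S).degree u = #(G.neighborFinset u ∩ S) := by
    have := congrArg card (G.map_neighborFinset_induce (s := (S : Set V)) u)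
    rw [card_map, Finset.toFinset_coe] at this
    rw [← this]
    convert (card_neighborFinset_eq_degree _ _).symm
  have hedges : #(G.induce S).edgeFinset = #{e ∈ G.edgeFinset | ∀ v ∈ e, v ∈ S} := by
    have := congrArg card (G.map_edgeFinset_induce (s := (S : Set V)))
    rw [card_map, Finset.toFinset_coe] at this
    convert this
    simp only [← mem_sym2_iff, filter_mem_eq_inter]
  rw [← hedges, ← sum_degrees_eq_twice_card_edges]
  simp_rw [hdeg]
  exact (sum_coe_sort S _).symm

def commonNeighborFinset (s : Finset V) : Finset V := {v | ∀ w ∈ s, G.Adj v w}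

variable {G}

@[simp]
lemma mem_commonNeighborFinset {s : Finset V} {v : V} :
    v ∈ G.commonNeighborFinset s ↔ ∀ w ∈ s, G.Adj v w := by
  simp [commonNeighborFinset]

lemma notMem_of_mem_commonNeighborFinset {s : Finset V} {v : V}
    (hv : v ∈ G.commonNeighborFinset s) : v ∉ s :=
  fun hvs => G.loopless.irrefl v (mem_commonNeighborFinset.1 hv v hvs)

lemma commonNeighborFinset_insert (u : V) (s : Finset V) :
    G.commonNeighborFinset (insert u s) = G.neighborFinset u ∩ G.commonNeighborFinset s := by
  ext v
  simp [adj_comm]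

variable (G)

lemma sum_commonNeighborFinset_insert {M : Type*} [AddCommMonoid M] (f : Finset V → M) (n : ℕ) :
    ∑ s ∈ G.cliqueFinset n, ∑ v ∈ G.commonNeighborFinset s, f (insert v s)
      = (n + 1) • ∑ t ∈ G.cliqueFinset (n + 1), f t := by
  have hcard : ∀ t ∈ G.cliqueFinset (n + 1), (n + 1) • f t = ∑ _v ∈ t, f t := fun t ht => by
    rw [sum_const, (mem_cliqueFinset_iff.1 ht).card_eq]
  rw [smul_sum, sum_congr rfl hcard, sum_sigma', sum_sigma']
  refine sum_bij' (fun x _ => ⟨insert x.2 x.1, x.2⟩) (fun x _ => ⟨x.1.erase x.2, x.2⟩)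
    ?_ ?_ ?_ ?_ (fun _ _ => rfl)
  · rintro ⟨s, v⟩ hx
    simp only [mem_sigma, mem_cliqueFinset_iff, mem_commonNeighborFinset] at hx ⊢
    exact ⟨hx.1.insert hx.2, mem_insert_self v s⟩
  · rintro ⟨t, v⟩ hx
    simp only [mem_sigma, mem_cliqueFinset_iff, mem_commonNeighborFinset, mem_erase] at hx ⊢
    exact ⟨hx.1.erase_of_mem hx.2, fun w hw => hx.1.isClique hx.2 hw.2 (Ne.symm hw.1)⟩
  · rintro ⟨s, v⟩ hx
    simp only [mem_sigma] at hx
    simp [erase_insert (notMem_of_mem_commonNeighborFinset hx.2)]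
  · rintro ⟨t, v⟩ hx
    simp only [mem_sigma] at hx
    simp [insert_erase hx.2]

lemma sum_card_commonNeighborFinset (n : ℕ) :
    ∑ s ∈ G.cliqueFinset n, #(G.commonNeighborFinset s) = (n + 1) * #(G.cliqueFinset (n + 1)) := by
  simpa only [card_eq_sum_ones, smul_eq_mul] using
    G.sum_commonNeighborFinset_insert (M := ℕ) (fun _ => 1) n

theorem add_two_mul_card_cliqueFinset_le {α : ℕ}
    (harb : ∀ S : Finset V, #{e ∈ G.edgeFinset | ∀ v ∈ e, v ∈ S} ≤ α * #S) (n : ℕ) :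
    (n + 2) * #(G.cliqueFinset (n + 2)) ≤ 2 * α * #(G.cliqueFinset (n + 1)) := by
  have hlink (s : Finset V) : ∑ u ∈ G.commonNeighborFinset s, #(G.commonNeighborFinset (insert u s))
      ≤ 2 * α * #(G.commonNeighborFinset s) := by
    simp_rw [commonNeighborFinset_insert, sum_card_neighborFinset_inter, mul_assoc]
    exact Nat.mul_le_mul_left 2 (harb _)
  have hmul : (n + 1) * ((n + 2) * #(G.cliqueFinset (n + 2)))
      ≤ (n + 1) * (2 * α * #(G.cliqueFinset (n + 1))) := calc
    _ = (n + 1) * ∑ s ∈ G.cliqueFinset (n + 1), #(G.commonNeighborFinset s) := by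
      rw [sum_card_commonNeighborFinset]
    _ = ∑ s ∈ G.cliqueFinset n, ∑ u ∈ G.commonNeighborFinset s,
          #(G.commonNeighborFinset (insert u s)) :=
      (G.sum_commonNeighborFinset_insert (fun t => #(G.commonNeighborFinset t)) n).symm
    _ ≤ ∑ s ∈ G.cliqueFinset n, 2 * α * #(G.commonNeighborFinset s) :=
      sum_le_sum fun s _ => hlink s
    _ = (n + 1) * (2 * α * #(G.cliqueFinset (n + 1))) := by
      rw [← mul_sum, sum_card_commonNeighborFinset]; ring
  exact Nat.le_of_mul_le_mul_left hmul n.succ_pos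

end SimpleGraph

/-- If `G` has arboricity at most `α` (every vertex subset `S` spans at most
`α·|S|` edges), then for every `t ≥ 2` the number of `t`-cliques satisfies
`n_t ≤ (2α/t)·n_{t-1}`. -/
theorem clique_count_step {V : Type*} [Fintype V] [DecidableEq V]
    (G : SimpleGraph V) [DecidableRel G.Adj] (α t : ℕ) (ht : 2 ≤ t)
    (harb : ∀ S : Finset V,
      (G.edgeFinset.filter (fun e => ∀ v ∈ e, v ∈ S)).card ≤ α * S.card) :
    ((G.cliqueFinset t).card : ℝ)
      ≤ (2 * α / t) * (G.cliqueFinset (t - 1)).card := by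
  obtain ⟨n, rfl⟩ : ∃ n, t = n + 2 := ⟨t - 2, by omega⟩
  rw [div_mul_eq_mul_div, le_div_iff₀ (by positivity), mul_comm]
  exact_mod_cast G.add_two_mul_card_cliqueFinset_le harb n
end

section
/- Let G be a finite simple graph with arboricity at most α, let n_t denote the number of t-cliques. For every 1 ≤ t < k, n_k ≤ (t!/k!)·n_t·(2α)^{k-t}. -/
/-!
By Hall's theorem applied to `α` copies of every vertex (the arboricity bound is exactly Hall's
condition), the edges can be oriented so that every vertex has out-degree at most `α`. An
`(r + 1)`-clique contains at least `r (r + 1) / 2` arcs, and deleting the head of such an arc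
leaves an `r`-clique together with an arc leaving one of its vertices; the clique is recovered
from this pair. An `r`-clique has at most `r α` leaving arcs, so `(r + 1) r n_{r+1} ≤ 2 r α n_r`,
and for `r ≥ 1` this is the step `n_{r+1} ≤ 2α / (r + 1) · n_r`, which is then iterated.
-/

open Finset

theorem Finset.exists_card_fiber_le_of_card_le_mul_card_biUnion {ι β : Type*} [Fintype ι]
    [DecidableEq β] (t : ι → Finset β) (c : ℕ) (h : ∀ s : Finset ι, #s ≤ c * #(s.biUnion t)) :
    ∃ f : ι → β, (∀ i, f i ∈ t i) ∧ ∀ b, #{i | f i = b} ≤ c := by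
  -- Hall's theorem after replacing every `b` by `c` copies of it.
  have hall : ∀ s : Finset ι, #s ≤ #(s.biUnion fun i => t i ×ˢ (univ : Finset (Fin c))) := by
    intro s
    have hunion : (s.biUnion fun i => t i ×ˢ (univ : Finset (Fin c))) = s.biUnion t ×ˢ univ := by
      ext; simp
    rw [hunion, card_product, card_univ, Fintype.card_fin, mul_comm]
    exact h s
  obtain ⟨g, hg_inj, hg_mem⟩ := (all_card_le_biUnion_card_iff_exists_injective _).1 hall
  refine ⟨fun i => (g i).1, fun i => (mem_product.1 (hg_mem i)).1, fun b => ?_⟩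
  calc #{i | (g i).1 = b} ≤ #(univ : Finset (Fin c)) := by
        refine card_le_card_of_injOn (fun i => (g i).2) (fun _ _ => mem_univ _) ?_
        intro i hi j hj hij
        simp only [coe_filter, mem_univ, true_and, Set.mem_ofPred_eq] at hi hj
        exact hg_inj (Prod.ext (hi.trans hj.symm) hij)
    _ = c := by simp

theorem Nat.factorial_mul_le_of_succ_mul_le {a : ℕ → ℕ} {c t : ℕ}
    (h : ∀ r, t ≤ r → (r + 1) * a (r + 1) ≤ c * a r) {k : ℕ} (htk : t ≤ k) :
    k.factorial * a k ≤ t.factorial * a t * c ^ (k - t) := by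
  induction k, htk using Nat.le_induction with
  | base => simp
  | succ n hn ih =>
    calc (n + 1).factorial * a (n + 1) = n.factorial * ((n + 1) * a (n + 1)) := by
          rw [Nat.factorial_succ]; ring
      _ ≤ n.factorial * (c * a n) := Nat.mul_le_mul_left _ (h n hn)
      _ = c * (n.factorial * a n) := by ring
      _ ≤ c * (t.factorial * a t * c ^ (n - t)) := Nat.mul_le_mul_left _ ih
      _ = t.factorial * a t * c ^ (n + 1 - t) := by rw [Nat.sub_add_comm hn, pow_succ]; ring

namespace SimpleGraph

variable {V : Type*} [DecidableEq V]

theorem exists_orientation_of_arboricity [Fintype V] (G : SimpleGraph V) [DecidableRel G.Adj]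
    (α : ℕ)
    (harb : ∀ S : Finset V, #(G.edgeFinset.filter (fun e => ∀ v ∈ e, v ∈ S)) ≤ α * #S) :
    ∃ D : V → Finset V, (∀ u, #(D u) ≤ α) ∧ ∀ ⦃u v⦄, G.Adj u v → v ∈ D u ∨ u ∈ D v := by
  obtain ⟨f, hf_mem, hf_fiber⟩ := exists_card_fiber_le_of_card_le_mul_card_biUnion
    (fun e : G.edgeSet => {v | v ∈ (e : Sym2 V)}) α fun s => by
      refine (card_le_card_of_injOn Subtype.val ?_ Subtype.val_injective.injOn).trans (harb _)
      intro e he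
      simp only [coe_filter, mem_edgeFinset, Set.mem_ofPred_eq]
      exact ⟨e.2, fun v hv => by simpa using ⟨e, ⟨e.2, he⟩, hv⟩⟩
  have hf_mem' : ∀ e : G.edgeSet, f e ∈ (e : Sym2 V) := fun e => by simpa using hf_mem e
  -- orient each edge away from the endpoint it was assigned to
  refine ⟨fun w => image (fun e : G.edgeSet => Sym2.Mem.other (hf_mem' e)) {e | f e = w},
    fun w => card_image_le.trans (hf_fiber w), fun u v huv => ?_⟩
  have hout : ∀ (e : G.edgeSet) (w x : V), (e : Sym2 V) = s(w, x) → f e = w →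
      x ∈ image (fun e : G.edgeSet => Sym2.Mem.other (hf_mem' e)) {e | f e = w} := by
    rintro e w x he rfl
    exact mem_image.2 ⟨e, by simp, Sym2.congr_right.1 ((Sym2.other_spec _).trans he)⟩
  rcases Sym2.mem_iff.1 (hf_mem' ⟨s(u, v), huv⟩) with hu | hv
  · exact .inl (hout _ u v rfl hu)
  · exact .inr (hout _ v u Sym2.eq_swap hv)

variable {G : SimpleGraph V} {D : V → Finset V}

theorem IsClique.card_offDiag_le (hD : ∀ ⦃u v⦄, G.Adj u v → v ∈ D u ∨ u ∈ D v)
    {K : Finset V} (hK : G.IsClique (K : Set V)) :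
    #K.offDiag ≤ 2 * #{p ∈ K.offDiag | p.2 ∈ D p.1} := by
  set A := {p ∈ K.offDiag | p.2 ∈ D p.1}
  have hcover : K.offDiag ⊆ A ∪ A.image Prod.swap := by
    rintro ⟨u, v⟩ huv
    obtain ⟨hu, hv, hne⟩ := mem_offDiag.1 huv
    rcases hD (hK hu hv hne) with h | h
    · exact mem_union_left _ (mem_filter.2 ⟨huv, h⟩)
    · refine mem_union_right _ (mem_image.2 ⟨(v, u), mem_filter.2 ⟨?_, h⟩, rfl⟩)
      exact mem_offDiag.2 ⟨hv, hu, hne.symm⟩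
  calc #K.offDiag ≤ #(A ∪ A.image Prod.swap) := card_le_card hcover
    _ ≤ #A + #(A.image Prod.swap) := card_union_le _ _
    _ ≤ 2 * #A := by have := card_image_le (s := A) (f := Prod.swap); omega

variable [Fintype V] [DecidableRel G.Adj]

theorem card_sigma_cliqueFinset_succ_le (r : ℕ) :
    #((G.cliqueFinset (r + 1)).sigma fun K => {p ∈ K.offDiag | p.2 ∈ D p.1})
      ≤ #((G.cliqueFinset r).sigma fun T => T.sigma D) := by
  refine card_le_card_of_injOn (fun x => ⟨x.1.erase x.2.2, ⟨x.2.1, x.2.2⟩⟩) ?_ ?_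
  · rintro ⟨K, u, v⟩ hx
    simp only [coe_sigma, Set.mem_sigma_iff, mem_coe, mem_cliqueFinset_iff, mem_filter,
      mem_offDiag] at hx ⊢
    obtain ⟨⟨hK, hcard⟩, ⟨hu, hv, hne⟩, huv⟩ := hx
    refine ⟨⟨hK.subset (erase_subset _ _), ?_⟩, mem_erase.2 ⟨hne, hu⟩, huv⟩
    rw [card_erase_of_mem hv, hcard, Nat.add_sub_cancel]
  · rintro ⟨K, u, v⟩ hx ⟨K', u', v'⟩ hx' heq
    simp only [coe_sigma, Set.mem_sigma_iff, mem_coe, mem_filter, mem_offDiag] at hx hx'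
    simp only [Sigma.mk.injEq, heq_eq_eq] at heq
    obtain ⟨hKK', rfl, rfl⟩ := heq
    simp only [Sigma.mk.injEq, heq_eq_eq, and_true]
    rw [← insert_erase hx.2.1.2.1, ← insert_erase hx'.2.1.2.1, hKK']

theorem succ_mul_card_cliqueFinset_succ_le {α : ℕ} (hα : ∀ u, #(D u) ≤ α)
    (hD : ∀ ⦃u v⦄, G.Adj u v → v ∈ D u ∨ u ∈ D v) {r : ℕ} (hr : 0 < r) :
    (r + 1) * #(G.cliqueFinset (r + 1)) ≤ 2 * α * #(G.cliqueFinset r) := by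
  have hpairs : (r + 1) * r * #(G.cliqueFinset (r + 1))
      ≤ 2 * #((G.cliqueFinset (r + 1)).sigma fun K => {p ∈ K.offDiag | p.2 ∈ D p.1}) := by
    rw [card_sigma, mul_sum, mul_comm, ← smul_eq_mul, ← sum_const]
    refine sum_le_sum fun K hK => ?_
    rw [mem_cliqueFinset_iff] at hK
    have := hK.1.card_offDiag_le hD
    rwa [offDiag_card, hK.2, ← Nat.mul_sub_one, Nat.add_sub_cancel] at this
  have harcs : #((G.cliqueFinset r).sigma fun T => T.sigma D) ≤ r * α * #(G.cliqueFinset r) := by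
    rw [card_sigma, mul_comm, ← smul_eq_mul]
    refine sum_le_card_nsmul _ _ _ fun T hT => ?_
    rw [card_sigma, ← (mem_cliqueFinset_iff.1 hT).2, ← smul_eq_mul]
    exact sum_le_card_nsmul _ _ _ fun u _ => hα u
  have := hpairs.trans (Nat.mul_le_mul_left 2 ((card_sigma_cliqueFinset_succ_le r).trans harcs))
  refine Nat.le_of_mul_le_mul_left ?_ hr
  linarith

end SimpleGraph

/-- If `G` has arboricity at most `α` (every vertex subset `S` spans at most
`α·|S|` edges), then for every `1 ≤ t < k`, `n_k ≤ (t!/k!)·n_t·(2α)^(k-t)`. -/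
theorem clique_count_iterated {V : Type*} [Fintype V] [DecidableEq V]
    (G : SimpleGraph V) [DecidableRel G.Adj] (α t k : ℕ) (ht : 1 ≤ t) (htk : t < k)
    (harb : ∀ S : Finset V,
      (G.edgeFinset.filter (fun e => ∀ v ∈ e, v ∈ S)).card ≤ α * S.card) :
    ((G.cliqueFinset k).card : ℝ)
      ≤ ((t.factorial : ℝ) / (k.factorial : ℝ)) * (G.cliqueFinset t).card
          * (2 * α) ^ (k - t) := by
  obtain ⟨D, hα, hD⟩ := G.exists_orientation_of_arboricity α harb
  have hnat : k.factorial * #(G.cliqueFinset k)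
      ≤ t.factorial * #(G.cliqueFinset t) * (2 * α) ^ (k - t) :=
    Nat.factorial_mul_le_of_succ_mul_le (a := fun r => #(G.cliqueFinset r))
      (fun r hr => SimpleGraph.succ_mul_card_cliqueFinset_succ_le hα hD (by omega)) htk.le
  rw [div_mul_eq_mul_div, div_mul_eq_mul_div, le_div_iff₀ (by positivity), mul_comm]
  exact_mod_cast hnat
end

section
/- Let wt be a legal weight function on ordered cliques of a graph G with respect to clique size k. Then the total weight of all vertices satisfies wt(V) ≤ n_k, the number of k-cliques of G. -/
/-!
Summing condition (2) over all ordered `t`-cliques shows that the total weight of ordered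
`t`-cliques is the same for every `1 ≤ t ≤ k`, since every ordered `(t+1)`-clique arises from
exactly one ordered `t`-clique by appending its last vertex. For `t = 1` this total is `wt(V)`.
For `t = k` the weights are `0` or `1`, and sending an ordered `k`-clique of weight `1` to its
underlying set is injective by the uniqueness part of condition (1), so the total is at most `n_k`.
-/

open Finset

/-- An ordered clique in `G`: a list of distinct, pairwise adjacent vertices. -/
def IsOrderedClique {V : Type*} (G : SimpleGraph V) (l : List V) : Prop :=
  l.Nodup ∧ l.Pairwise G.Adj

theorem List.ofFn_snoc {α : Type*} {n : ℕ} (f : Fin n → α) (a : α) :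
    List.ofFn (Fin.snoc f a) = List.ofFn f ++ [a] := by
  rw [List.ofFn_succ']
  simp

namespace IsOrderedClique

variable {V : Type*} {G : SimpleGraph V}

theorem singleton (v : V) : IsOrderedClique G [v] :=
  ⟨List.nodup_singleton v, List.pairwise_singleton _ _⟩

theorem of_append_left {l₁ l₂ : List V} (h : IsOrderedClique G (l₁ ++ l₂)) :
    IsOrderedClique G l₁ :=
  ⟨h.1.of_append_left, h.2.sublist (List.sublist_append_left _ _)⟩

theorem isNClique_toFinset [DecidableEq V] {l : List V} (h : IsOrderedClique G l) :
    G.IsNClique l.length l.toFinset := by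
  rw [SimpleGraph.isNClique_iff, List.toFinset_card_of_nodup h.1]
  refine ⟨fun a ha b hb hab => ?_, rfl⟩
  have : Std.Symm G.Adj := ⟨fun _ _ => G.adj_symm⟩
  exact h.2.forall (List.mem_toFinset.mp ha) (List.mem_toFinset.mp hb) hab

end IsOrderedClique

section OrderedCliqueFinset

variable {V : Type*} [Fintype V] (G : SimpleGraph V) (wt : List V → ℕ)

open Classical in
noncomputable def orderedCliqueFinset (t : ℕ) : Finset (Fin t → V) :=
  {f | IsOrderedClique G (List.ofFn f)}

theorem mem_orderedCliqueFinset {t : ℕ} {f : Fin t → V} :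
    f ∈ orderedCliqueFinset G t ↔ IsOrderedClique G (List.ofFn f) := by
  simp [orderedCliqueFinset]

theorem sum_orderedCliqueFinset_one :
    ∑ f ∈ orderedCliqueFinset G 1, wt (List.ofFn f) = ∑ v, wt [v] := by
  have huniv : orderedCliqueFinset G 1 = Finset.univ := Finset.eq_univ_of_forall fun f =>
    (mem_orderedCliqueFinset G).mpr (by simpa using IsOrderedClique.singleton (f 0))
  rw [huniv]
  exact Fintype.sum_equiv (Equiv.funUnique (Fin 1) V) _ _ fun f => by simp

open Classical in
theorem sum_orderedCliqueFinset_succ {t : ℕ}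
    (hext : ∀ l : List V, IsOrderedClique G l → l.length = t →
      wt l = ∑ v ∈ Finset.univ.filter (fun v => IsOrderedClique G (l ++ [v])), wt (l ++ [v])) :
    ∑ f ∈ orderedCliqueFinset G (t + 1), wt (List.ofFn f) =
      ∑ f ∈ orderedCliqueFinset G t, wt (List.ofFn f) := by
  let extWeight (l : List V) (v : V) : ℕ := if IsOrderedClique G (l ++ [v]) then wt (l ++ [v]) else 0
  have hrow (g : Fin t → V) :
      ∑ v, extWeight (List.ofFn g) v =
        if IsOrderedClique G (List.ofFn g) then wt (List.ofFn g) else 0 := by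
    split_ifs with hg
    · rw [hext _ hg (List.length_ofFn), Finset.sum_filter]
    · exact Finset.sum_eq_zero fun v _ => if_neg fun hv => hg hv.of_append_left
  calc ∑ f ∈ orderedCliqueFinset G (t + 1), wt (List.ofFn f)
      = ∑ p : V × (Fin t → V), extWeight (List.ofFn p.2) p.1 := by
        rw [orderedCliqueFinset, Finset.sum_filter]
        refine (Fintype.sum_equiv (Fin.snocEquiv fun _ => V) _ _ fun p => ?_).symm
        simp only [extWeight, Fin.snocEquiv, Equiv.coe_fn_mk, List.ofFn_snoc]
    _ = ∑ g : Fin t → V, ∑ v, extWeight (List.ofFn g) v := by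
        rw [Fintype.sum_prod_type, Finset.sum_comm]
    _ = ∑ f ∈ orderedCliqueFinset G t, wt (List.ofFn f) := by
        simp only [hrow, orderedCliqueFinset, Finset.sum_filter]

open Classical in
theorem sum_orderedCliqueFinset_eq_one {k : ℕ}
    (hext : ∀ l : List V, IsOrderedClique G l → 1 ≤ l.length → l.length < k →
      wt l = ∑ v ∈ Finset.univ.filter (fun v => IsOrderedClique G (l ++ [v])), wt (l ++ [v]))
    {t : ℕ} (ht : 1 ≤ t) (htk : t ≤ k) :
    ∑ f ∈ orderedCliqueFinset G t, wt (List.ofFn f) =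
      ∑ f ∈ orderedCliqueFinset G 1, wt (List.ofFn f) := by
  induction t, ht using Nat.le_induction with
  | base => rfl
  | succ t ht ih =>
    rw [sum_orderedCliqueFinset_succ G wt fun l hl hlt => hext l hl (hlt ▸ ht) (by omega),
      ih (by omega)]

theorem sum_orderedCliqueFinset_le_card_cliqueFinset [DecidableEq V] [DecidableRel G.Adj]
    (k : ℕ) (hle : ∀ l : List V, IsOrderedClique G l → l.length = k → wt l ≤ 1)
    (hunique : ∀ l₁ l₂ : List V, IsOrderedClique G l₁ → IsOrderedClique G l₂ →
      l₁.length = k → l₂.length = k → wt l₁ = 1 → wt l₂ = 1 →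
      l₁.toFinset = l₂.toFinset → l₁ = l₂) :
    ∑ f ∈ orderedCliqueFinset G k, wt (List.ofFn f) ≤ #(G.cliqueFinset k) := by
  calc ∑ f ∈ orderedCliqueFinset G k, wt (List.ofFn f)
      = #{f ∈ orderedCliqueFinset G k | wt (List.ofFn f) = 1} := by
        rw [Finset.card_filter]
        refine Finset.sum_congr rfl fun f hf => ?_
        have := hle _ ((mem_orderedCliqueFinset G).mp hf) (List.length_ofFn)
        split_ifs <;> omega
    _ ≤ #(G.cliqueFinset k) := by
        refine Finset.card_le_card_of_injOn (fun f => (List.ofFn f).toFinset) ?_ ?_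
        · intro f hf
          have hf := (mem_orderedCliqueFinset G).mp (Finset.mem_filter.mp hf).1
          simpa [SimpleGraph.mem_cliqueFinset_iff] using hf.isNClique_toFinset
        · intro f₁ hf₁ f₂ hf₂ heq
          obtain ⟨hf₁, hw₁⟩ := Finset.mem_filter.mp hf₁
          obtain ⟨hf₂, hw₂⟩ := Finset.mem_filter.mp hf₂
          exact List.ofFn_injective <| hunique _ _ ((mem_orderedCliqueFinset G).mp hf₁)
            ((mem_orderedCliqueFinset G).mp hf₂) List.length_ofFn List.length_ofFn hw₁ hw₂ heq

end OrderedCliqueFinset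

open Classical in
theorem legal_weight_total_le {V : Type*} [Fintype V] [DecidableEq V]
    (G : SimpleGraph V) [DecidableRel G.Adj] (k : ℕ) (hk : 1 ≤ k)
    (wt : List V → ℕ)
    -- legality, condition 1: ordered k-cliques get weight 0 or 1
    (h1 : ∀ l : List V, IsOrderedClique G l → l.length = k → wt l ≤ 1)
    -- legality, condition 1 (uniqueness): at most one ordering of an unordered
    -- k-clique has weight 1
    (h1' : ∀ l₁ l₂ : List V, IsOrderedClique G l₁ → IsOrderedClique G l₂ →
      l₁.length = k → l₂.length = k → wt l₁ = 1 → wt l₂ = 1 →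
      l₁.toFinset = l₂.toFinset → l₁ = l₂)
    -- legality, condition 2: the weight of an ordered t-clique (1 ≤ t ≤ k-1) is the sum
    -- of the weights of its single-vertex ordered clique extensions
    (h2 : ∀ l : List V, IsOrderedClique G l → 1 ≤ l.length → l.length < k →
      wt l = ∑ v ∈ Finset.univ.filter (fun v => IsOrderedClique G (l ++ [v])),
        wt (l ++ [v])) :
    ∑ v : V, wt [v] ≤ (G.cliqueFinset k).card := by
  calc ∑ v : V, wt [v] = ∑ f ∈ orderedCliqueFinset G 1, wt (List.ofFn f) :=
        (sum_orderedCliqueFinset_one G wt).symm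
    _ = ∑ f ∈ orderedCliqueFinset G k, wt (List.ofFn f) :=
        (sum_orderedCliqueFinset_eq_one G wt h2 hk le_rfl).symm
    _ ≤ (G.cliqueFinset k).card :=
        sum_orderedCliqueFinset_le_card_cliqueFinset G wt k h1 h1'
end

section
/- For every 1 ≤ i ≤ k−1 and i ≤ j ≤ k−1, the number of k-cliques of G that contain at least one j-costly i-clique, summed over all i ∈ [k−1] and j, is at most 2^{k+1}·γ·ñ_k. More precisely, for fixed i and j, Σ over j-costly i-cliques I of c_k(I) ≤ C(j,i)·γ·ñ_k, where C(j,i) is the binomial coefficient. -/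
/-!
Orient the edges of `G` so that every vertex has out-degree at most `α`: the arboricity bound
`|E(S)| ≤ α|S|` is exactly Hall's condition for matching every edge to one of `α` slots at one of
its endpoints. Fix a linear order on `V`. Every `(j+1)`-clique `T` contains a vertex `x` that is an
out-neighbour of the least vertex of `T \ {x}`; charging `T` to `T \ {x}` charges at most `α`
cliques to each `j`-clique, and `d(T) ≤ d(T \ {x})`. Starting from `∑_v d(v) = 2m`, induction gives
`∑_{J ∈ C_j(G)} d(J) ≤ 2mα^{j-1}`. As each `j`-clique contains `C(j,i)` `i`-cliques, the sum of
`d(C_j(I))` over all `i`-cliques `I` is at most `C(j,i)·2mα^{j-1}`, and a Markov-type argument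
bounds the total `c_k` of the costly ones by `C(j,i)·γ·ñ_k`. Finally, by the hockey-stick identity,
`∑_{1 ≤ i ≤ j ≤ k-1} C(j,i) ≤ 2^k`.
-/

open Finset

namespace Finset

variable {ι κ R : Type*}

lemma sum_comp_le_mul_sum [DecidableEq κ] [CommSemiring R] [PartialOrder R] [IsOrderedRing R]
    {s : Finset ι} {t : Finset κ} {g : ι → κ} {w : κ → R} {n : ℕ}
    (hg : ∀ i ∈ s, g i ∈ t) (hw : ∀ k ∈ t, 0 ≤ w k) (hfiber : ∀ k ∈ t, #{i ∈ s | g i = k} ≤ n) :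
    ∑ i ∈ s, w (g i) ≤ n * ∑ k ∈ t, w k := by
  rw [← sum_fiberwise_of_maps_to hg, mul_sum]
  refine sum_le_sum fun k hk => ?_
  rw [sum_congr rfl fun i hi => by rw [(mem_filter.mp hi).2], sum_const, nsmul_eq_mul]
  exact mul_le_mul_of_nonneg_right (Nat.mono_cast (hfiber k hk)) (hw k hk)

lemma sum_filter_mul_lt_mul_le [CommRing R] [LinearOrder R] [IsStrictOrderedRing R]
    {s : Finset ι} {c w : ι → R} {B D K : R}
    (hB : 0 ≤ B) (hD : 0 ≤ D) (hK : 0 ≤ K) (hw : ∀ i ∈ s, 0 ≤ w i)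
    (hsum : ∑ i ∈ s, w i ≤ B * D) :
    ∑ i ∈ s with D * c i < K * w i, c i ≤ B * K := by
  rcases hD.lt_or_eq with hD | rfl
  · refine le_of_mul_le_mul_left ?_ hD
    calc D * ∑ i ∈ s with D * c i < K * w i, c i
        ≤ ∑ i ∈ s with D * c i < K * w i, K * w i := by
          rw [mul_sum]; exact sum_le_sum fun i hi => (mem_filter.mp hi).2.le
      _ ≤ K * ∑ i ∈ s, w i := by
          rw [← mul_sum]
          exact mul_le_mul_of_nonneg_left
            (sum_le_sum_of_subset_of_nonneg (filter_subset _ _) fun i hi _ => hw i hi) hK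
      _ ≤ D * (B * K) := by nlinarith
  · have hw0 : ∀ i ∈ s, w i = 0 :=
      (sum_eq_zero_iff_of_nonneg hw).mp (le_antisymm (by simpa using hsum) (sum_nonneg hw))
    rw [filter_false_of_mem fun i hi => by simp [hw0 i hi], sum_empty]
    positivity

end Finset

lemma Nat.sum_Icc_sum_Icc_choose_le (n : ℕ) :
    ∑ i ∈ Icc 1 n, ∑ j ∈ Icc i n, j.choose i ≤ 2 ^ (n + 1) := by
  simp_rw [Nat.sum_Icc_choose, ← Nat.sum_range_choose (n + 1)]
  calc ∑ i ∈ Icc 1 n, (n + 1).choose (i + 1)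
      = ∑ m ∈ (Icc 1 n).image (· + 1), (n + 1).choose m :=
        (sum_image fun _ _ _ _ => Nat.succ_inj.mp).symm
    _ ≤ _ := sum_le_sum_of_subset fun m hm => by simp at hm ⊢; omega

lemma exists_anchor (V : Type*) [Nonempty V] :
    ∃ anc : Finset V → V, (∀ S : Finset V, S.Nonempty → anc S ∈ S) ∧
      ∀ ⦃S T : Finset V⦄, S ⊆ T → anc T ∈ S → anc S = anc T := by
  classical
  let := IsWellOrder.linearOrder (WellOrderingRel (α := V))
  refine ⟨fun S => if h : S.Nonempty then S.min' h else Classical.arbitrary V,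
    fun S hS => by simp only [dif_pos hS]; exact S.min'_mem hS, fun S T hST hT => ?_⟩
  have hS : S.Nonempty := ⟨_, hT⟩
  have hT' : T.Nonempty := hS.mono hST
  simp only [dif_pos hS, dif_pos hT'] at hT ⊢
  exact le_antisymm (S.min'_le _ hT) (T.min'_le _ (hST (S.min'_mem hS)))

namespace SimpleGraph

lemma IsClique.exists_mem_out_anc_erase {V : Type*} [DecidableEq V] {G : SimpleGraph V}
    {O : V → Finset V} (hO : ∀ ⦃u v⦄, G.Adj u v → v ∈ O u ∨ u ∈ O v)
    {anc : Finset V → V} (hanc_mem : ∀ S : Finset V, S.Nonempty → anc S ∈ S)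
    (hanc_sub : ∀ ⦃S T : Finset V⦄, S ⊆ T → anc T ∈ S → anc S = anc T)
    {T : Finset V} (hT : G.IsClique (T : Set V)) (hcard : 2 ≤ #T) :
    ∃ x ∈ T, x ∈ O (anc (T.erase x)) := by
  have hTne : T.Nonempty := card_pos.mp (by omega)
  set a := anc T
  have ha : a ∈ T := hanc_mem T hTne
  by_cases hout : ∃ x ∈ T.erase a, x ∈ O a
  · obtain ⟨x, hx, hxa⟩ := hout
    obtain ⟨hxa_ne, hxT⟩ := mem_erase.mp hx
    refine ⟨x, hxT, ?_⟩
    rwa [hanc_sub (erase_subset x T) (mem_erase.mpr ⟨Ne.symm hxa_ne, ha⟩)]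
  · have hne : (T.erase a).Nonempty := card_pos.mp (by rw [card_erase_of_mem ha]; omega)
    obtain ⟨hba, hbT⟩ := mem_erase.mp (hanc_mem _ hne)
    exact ⟨a, ha, (hO (hT hbT ha hba)).resolve_right fun hb => hout ⟨_, hanc_mem _ hne, hb⟩⟩

variable {V : Type*} [Fintype V] (G : SimpleGraph V) [DecidableRel G.Adj]

-- `minDegreeOn G ∅ = 0`, since `sInf ∅ = 0` in `ℝ`.
noncomputable def minDegreeOn (J : Finset V) : ℝ :=
  sInf ((fun v => (G.degree v : ℝ)) '' (J : Set V))

lemma minDegreeOn_nonneg (J : Finset V) : 0 ≤ G.minDegreeOn J :=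
  Real.sInf_nonneg <| by rintro _ ⟨v, -, rfl⟩; positivity

lemma minDegreeOn_le_degree {J : Finset V} {v : V} (hv : v ∈ J) :
    G.minDegreeOn J ≤ G.degree v :=
  csInf_le (J.finite_toSet.image _).bddBelow ⟨v, hv, rfl⟩

lemma minDegreeOn_anti {S T : Finset V} (hST : S ⊆ T) (hS : S.Nonempty) :
    G.minDegreeOn T ≤ G.minDegreeOn S := by
  obtain ⟨v, hv, hmin⟩ :=
    ((coe_nonempty.mpr hS).image fun v => (G.degree v : ℝ)).csInf_mem (S.finite_toSet.image _)
  exact (G.minDegreeOn_le_degree (hST hv)).trans_eq hmin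

@[simp]
lemma minDegreeOn_singleton (v : V) : G.minDegreeOn {v} = G.degree v := by
  rw [minDegreeOn, coe_singleton, Set.image_singleton, csInf_singleton]

variable [DecidableEq V]

lemma exists_orientation_of_card_edges_le {α : ℕ}
    (h : ∀ S : Finset V, #{e ∈ G.edgeFinset | ∀ v ∈ e, v ∈ S} ≤ α * #S) :
    ∃ O : V → Finset V, (∀ v, #(O v) ≤ α) ∧ ∀ ⦃u v⦄, G.Adj u v → v ∈ O u ∨ u ∈ O v := by
  let t : G.edgeSet → Finset (V × Fin α) := fun e => e.1.toFinset ×ˢ univ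
  have hall : ∀ s : Finset G.edgeSet, #s ≤ #(s.biUnion t) := by
    intro s
    set W := s.biUnion fun e => e.1.toFinset
    have hW : s.biUnion t = W ×ˢ univ := by ext; simp [t, W]
    calc #s ≤ #{e ∈ G.edgeFinset | ∀ v ∈ e, v ∈ W} :=
          card_le_card_of_injOn Subtype.val
            (fun e he => by
              simp only [coe_filter, mem_edgeFinset, Set.mem_ofPred_eq]
              exact ⟨e.2, fun v hv => mem_biUnion.mpr ⟨e, he, Sym2.mem_toFinset.mpr hv⟩⟩)
            Subtype.val_injective.injOn
      _ ≤ α * #W := h W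
      _ = #(s.biUnion t) := by rw [hW, card_product, card_univ, Fintype.card_fin, mul_comm]
  obtain ⟨f, hf, hft⟩ := (all_card_le_biUnion_card_iff_existsInjective' t).mp hall
  have hf_mem : ∀ e, (f e).1 ∈ e.1 := fun e => Sym2.mem_toFinset.mp (mem_product.mp (hft e)).1
  refine ⟨fun u => {v | ∃ h : G.Adj u v, (f ⟨s(u, v), h⟩).1 = u}, fun u => ?_, fun u v huv => ?_⟩
  · rw [← Fintype.card_coe]
    refine (Fintype.card_le_of_injective
      (fun v => (f ⟨s(u, v.1), (mem_filter.mp v.2).2.fst⟩).2) fun v w hvw => ?_).trans_eq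
      (Fintype.card_fin α)
    obtain ⟨-, hv, hfv⟩ := mem_filter.mp v.2
    obtain ⟨-, hw, hfw⟩ := mem_filter.mp w.2
    have := hf (Prod.ext (hfv.trans hfw.symm) hvw)
    exact Subtype.ext (Sym2.congr_right.mp (congrArg Subtype.val this))
  · rcases Sym2.mem_iff.mp (hf_mem ⟨s(u, v), huv⟩) with hu | hv
    · exact Or.inl (mem_filter.mpr ⟨mem_univ _, huv, hu⟩)
    · refine Or.inr (mem_filter.mpr ⟨mem_univ _, huv.symm, ?_⟩)
      simp_rw [Sym2.eq_swap (a := v)]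
      exact hv

lemma sum_minDegreeOn_cliqueFinset_succ_le {O : V → Finset V} {α : ℕ}
    (hO : ∀ ⦃u v⦄, G.Adj u v → v ∈ O u ∨ u ∈ O v) (hOcard : ∀ v, #(O v) ≤ α) {j : ℕ}
    (hj : 1 ≤ j) :
    ∑ T ∈ G.cliqueFinset (j + 1), G.minDegreeOn T
      ≤ α * ∑ J ∈ G.cliqueFinset j, G.minDegreeOn J := by
  have hrhs : 0 ≤ α * ∑ J ∈ G.cliqueFinset j, G.minDegreeOn J :=
    mul_nonneg α.cast_nonneg (sum_nonneg fun J _ => G.minDegreeOn_nonneg J)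
  rcases isEmpty_or_nonempty V with hV | hV
  · rwa [sum_eq_zero fun T hT => absurd (mem_cliqueFinset_iff.mp hT).card_eq (by
      simp [eq_empty_of_isEmpty T])]
  obtain ⟨anc, hanc_mem, hanc_sub⟩ := exists_anchor V
  have hx : ∀ T ∈ G.cliqueFinset (j + 1), ∃ x ∈ T, x ∈ O (anc (T.erase x)) := by
    intro T hT
    have hT := mem_cliqueFinset_iff.mp hT
    exact hT.isClique.exists_mem_out_anc_erase hO hanc_mem hanc_sub (by rw [hT.card_eq]; omega)
  choose! x hxT hxO using hx
  have hmaps : ∀ T ∈ G.cliqueFinset (j + 1), T.erase (x T) ∈ G.cliqueFinset j := fun T hT =>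
    mem_cliqueFinset_iff.mpr ((mem_cliqueFinset_iff.mp hT).erase_of_mem (hxT T hT))
  have hfiber : ∀ J ∈ G.cliqueFinset j,
      #{T ∈ G.cliqueFinset (j + 1) | T.erase (x T) = J} ≤ α := by
    refine fun J _ => (card_le_card_of_injOn x (fun T hT => ?_) fun T₁ h₁ T₂ h₂ h => ?_).trans
      (hOcard (anc J))
    · obtain ⟨hTc, rfl⟩ := mem_filter.mp (mem_coe.mp hT)
      exact hxO T hTc
    · obtain ⟨hT₁, hJ₁⟩ := mem_filter.mp (mem_coe.mp h₁)
      obtain ⟨hT₂, hJ₂⟩ := mem_filter.mp (mem_coe.mp h₂)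
      rw [← insert_erase (hxT T₁ hT₁), ← insert_erase (hxT T₂ hT₂), hJ₁, hJ₂, h]
  calc ∑ T ∈ G.cliqueFinset (j + 1), G.minDegreeOn T
      ≤ ∑ T ∈ G.cliqueFinset (j + 1), G.minDegreeOn (T.erase (x T)) :=
        sum_le_sum fun T hT => G.minDegreeOn_anti (erase_subset _ _)
          (card_pos.mp (by rw [(mem_cliqueFinset_iff.mp (hmaps T hT)).card_eq]; omega))
      _ ≤ α * ∑ J ∈ G.cliqueFinset j, G.minDegreeOn J :=
        sum_comp_le_mul_sum hmaps (fun J _ => G.minDegreeOn_nonneg J) hfiber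

lemma sum_minDegreeOn_cliqueFinset_one :
    ∑ J ∈ G.cliqueFinset 1, G.minDegreeOn J = 2 * #G.edgeFinset := by
  have h1 : G.cliqueFinset 1 = univ.map ⟨({·}), singleton_injective⟩ := by
    ext T
    simp [isNClique_one, eq_comm]
  rw [h1, sum_map]
  simp only [Function.Embedding.coeFn_mk, minDegreeOn_singleton]
  exact_mod_cast G.sum_degrees_eq_twice_card_edges

theorem sum_minDegreeOn_cliqueFinset_le {α : ℕ}
    (h : ∀ S : Finset V, #{e ∈ G.edgeFinset | ∀ v ∈ e, v ∈ S} ≤ α * #S) {j : ℕ} (hj : 1 ≤ j) :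
    ∑ J ∈ G.cliqueFinset j, G.minDegreeOn J ≤ 2 * #G.edgeFinset * (α : ℝ) ^ (j - 1) := by
  obtain ⟨O, hOcard, hO⟩ := G.exists_orientation_of_card_edges_le h
  induction j, hj using Nat.le_induction with
  | base => simp [sum_minDegreeOn_cliqueFinset_one]
  | succ n hn ih =>
    calc ∑ J ∈ G.cliqueFinset (n + 1), G.minDegreeOn J
        ≤ α * ∑ J ∈ G.cliqueFinset n, G.minDegreeOn J :=
          G.sum_minDegreeOn_cliqueFinset_succ_le hO hOcard hn
      _ ≤ α * (2 * #G.edgeFinset * (α : ℝ) ^ (n - 1)) := by gcongr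
      _ = 2 * #G.edgeFinset * (α : ℝ) ^ (n + 1 - 1) := by
          rw [show n + 1 - 1 = n - 1 + 1 by omega, pow_succ]; ring

lemma card_cliqueFinset_filter_subset {i j : ℕ} {J : Finset V} (hJ : J ∈ G.cliqueFinset j) :
    #{I ∈ G.cliqueFinset i | I ⊆ J} = j.choose i := by
  have hJ := mem_cliqueFinset_iff.mp hJ
  rw [← hJ.card_eq, ← card_powersetCard]
  congr 1
  ext I
  simp only [mem_filter, mem_powersetCard, mem_cliqueFinset_iff]
  exact ⟨fun ⟨hI, hIJ⟩ => ⟨hIJ, hI.card_eq⟩,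
    fun ⟨hIJ, hI⟩ => ⟨⟨hJ.isClique.subset (coe_subset.mpr hIJ), hI⟩, hIJ⟩⟩

lemma sum_cliqueFinset_sum_cliqueFinset_superset {M : Type*} [AddCommMonoid M] (i j : ℕ)
    (w : Finset V → M) :
    ∑ I ∈ G.cliqueFinset i, ∑ J ∈ G.cliqueFinset j with I ⊆ J, w J
      = j.choose i • ∑ J ∈ G.cliqueFinset j, w J := by
  rw [sum_comm' (t' := G.cliqueFinset j) (s' := fun J => {I ∈ G.cliqueFinset i | I ⊆ J})
    (by simp only [mem_filter]; tauto), smul_sum]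
  exact sum_congr rfl fun J hJ => by rw [sum_const, G.card_cliqueFinset_filter_subset hJ]

theorem sum_costly_card_cliqueFinset_superset_le {α : ℕ}
    (h : ∀ S : Finset V, #{e ∈ G.edgeFinset | ∀ v ∈ e, v ∈ S} ≤ α * #S) {K : ℝ} (hK : 0 ≤ K)
    {i j : ℕ} (hi : 1 ≤ i) (hij : i ≤ j) (k : ℕ) :
    ∑ I ∈ G.cliqueFinset i with
        2 * #G.edgeFinset * (α : ℝ) ^ (j - 1) * #{C ∈ G.cliqueFinset k | I ⊆ C}
          < K * ∑ J ∈ G.cliqueFinset j with I ⊆ J, G.minDegreeOn J,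
      (#{C ∈ G.cliqueFinset k | I ⊆ C} : ℝ) ≤ j.choose i * K := by
  refine sum_filter_mul_lt_mul_le (Nat.cast_nonneg _) (by positivity) hK
    (fun I _ => sum_nonneg fun J _ => G.minDegreeOn_nonneg J) ?_
  rw [G.sum_cliqueFinset_sum_cliqueFinset_superset, nsmul_eq_mul]
  exact mul_le_mul_of_nonneg_left (G.sum_minDegreeOn_cliqueFinset_le h (hi.trans hij))
    (Nat.cast_nonneg _)

end SimpleGraph

open Classical in
theorem costly_cliques_bound_general {V : Type*} [Fintype V] [DecidableEq V]
    (G : SimpleGraph V) [DecidableRel G.Adj] (α k : ℕ)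
    (γ ntk : ℝ) (hγ : 0 < γ) (hntk : 0 < ntk)
    (harb : ∀ S : Finset V,
      (G.edgeFinset.filter (fun e => ∀ v ∈ e, v ∈ S)).card ≤ α * (S.card - 1)) :
    (∀ i j : ℕ, 1 ≤ i → i ≤ j → j ≤ k - 1 →
      ∑ I ∈ (G.cliqueFinset i).filter (fun I =>
          2 * (G.edgeFinset.card : ℝ) * (α : ℝ) ^ (j - 1)
              * (((G.cliqueFinset k).filter (fun C => I ⊆ C)).card : ℝ)
            < γ * ntk * ∑ J ∈ (G.cliqueFinset j).filter (fun J => I ⊆ J),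
                (sInf ((fun v => G.degree v) '' (J : Set V)) : ℝ)),
        (((G.cliqueFinset k).filter (fun C => I ⊆ C)).card : ℝ)
        ≤ (j.choose i : ℝ) * γ * ntk) ∧
    ∑ i ∈ Finset.Icc 1 (k - 1), ∑ j ∈ Finset.Icc i (k - 1),
      ∑ I ∈ (G.cliqueFinset i).filter (fun I =>
          2 * (G.edgeFinset.card : ℝ) * (α : ℝ) ^ (j - 1)
              * (((G.cliqueFinset k).filter (fun C => I ⊆ C)).card : ℝ)
            < γ * ntk * ∑ J ∈ (G.cliqueFinset j).filter (fun J => I ⊆ J),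
                (sInf ((fun v => G.degree v) '' (J : Set V)) : ℝ)),
        (((G.cliqueFinset k).filter (fun C => I ⊆ C)).card : ℝ)
      ≤ 2 ^ (k + 1) * γ * ntk := by
  have harb' (S : Finset V) : #{e ∈ G.edgeFinset | ∀ v ∈ e, v ∈ S} ≤ α * #S :=
    (harb S).trans (Nat.mul_le_mul_left α (Nat.sub_le _ _))
  have hcostly (i j : ℕ) (hi : 1 ≤ i) (hij : i ≤ j) :=
    (G.sum_costly_card_cliqueFinset_superset_le harb' (mul_pos hγ hntk).le hi hij k).trans_eq
      (mul_assoc _ γ ntk).symm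
  refine ⟨fun i j hi hij _ => hcostly i j hi hij, ?_⟩
  have hchoose : ∑ i ∈ Icc 1 (k - 1), ∑ j ∈ Icc i (k - 1), (j.choose i : ℝ) ≤ 2 ^ (k + 1) := by
    exact_mod_cast (Nat.sum_Icc_sum_Icc_choose_le (k - 1)).trans
      (Nat.pow_le_pow_right two_pos (by omega))
  calc _ ≤ ∑ i ∈ Icc 1 (k - 1), ∑ j ∈ Icc i (k - 1), (j.choose i : ℝ) * γ * ntk :=
        sum_le_sum fun i hi => sum_le_sum fun j hj =>
          hcostly i j (mem_Icc.mp hi).1 (mem_Icc.mp hj).1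
    _ = (∑ i ∈ Icc 1 (k - 1), ∑ j ∈ Icc i (k - 1), (j.choose i : ℝ)) * γ * ntk := by
        simp only [sum_mul]
    _ ≤ 2 ^ (k + 1) * γ * ntk := by gcongr

open Classical in
theorem costly_cliques_bound {V : Type*} [Fintype V] [DecidableEq V]
    (G : SimpleGraph V) [DecidableRel G.Adj] (α k : ℕ) (hk : 1 ≤ k)
    (γ ntk : ℝ) (hγ : 0 < γ) (hntk : 0 < ntk)
    (harb : ∀ S : Finset V,
      (G.edgeFinset.filter (fun e => ∀ v ∈ e, v ∈ S)).card ≤ α * (S.card - 1)) :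
    (∀ i j : ℕ, 1 ≤ i → i ≤ j → j ≤ k - 1 →
      ∑ I ∈ (G.cliqueFinset i).filter (fun I =>
          2 * (G.edgeFinset.card : ℝ) * (α : ℝ) ^ (j - 1)
              * (((G.cliqueFinset k).filter (fun C => I ⊆ C)).card : ℝ)
            < γ * ntk * ∑ J ∈ (G.cliqueFinset j).filter (fun J => I ⊆ J),
                (sInf ((fun v => G.degree v) '' (J : Set V)) : ℝ)),
        (((G.cliqueFinset k).filter (fun C => I ⊆ C)).card : ℝ)
        ≤ (j.choose i : ℝ) * γ * ntk) ∧
    ∑ i ∈ Finset.Icc 1 (k - 1), ∑ j ∈ Finset.Icc i (k - 1),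
      ∑ I ∈ (G.cliqueFinset i).filter (fun I =>
          2 * (G.edgeFinset.card : ℝ) * (α : ℝ) ^ (j - 1)
              * (((G.cliqueFinset k).filter (fun C => I ⊆ C)).card : ℝ)
            < γ * ntk * ∑ J ∈ (G.cliqueFinset j).filter (fun J => I ⊆ J),
                (sInf ((fun v => G.degree v) '' (J : Set V)) : ℝ)),
        (((G.cliqueFinset k).filter (fun C => I ⊆ C)).card : ℝ)
      ≤ 2 ^ (k + 1) * γ * ntk :=
  costly_cliques_bound_general G α k γ ntk hγ hntk harb
end
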